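/- A graph G on n ≥ 3 vertices satisfies λ_1(G) > 0, λ_2(G) ≤ 0 and λ_3(G) < 0 if and only if G is isomorphic to K_n, to K_1 + K_{n−1}, or to K_n \ e for an edge e. -/

import Mathlib

open SimpleGraph Finset

/-- Adjacency matrix over `ℝ` (classical decidability). -/
noncomputable def adjMatR {n : ℕ} (G : SimpleGraph (Fin n)) : Matrix (Fin n) (Fin n) ℝ :=
  @SimpleGraph.adjMatrix ℝ (Fin n) G (Classical.decRel _) _ _

lemma adjMatR_isHermitian {n : ℕ} (G : SimpleGraph (Fin n)) : (adjMatR G).IsHermitian := by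
  have h : (adjMatR G).IsSymm := @SimpleGraph.isSymm_adjMatrix ℝ (Fin n) G (Classical.decRel _) _ _
  first
    | exact (Matrix.conjTranspose_eq_transpose_of_trivial _).trans h
    | simpa [Matrix.IsHermitian, Matrix.conjTranspose, Matrix.IsSymm, starRingEnd_apply, star_trivial] using h

/-- Multiset of adjacency eigenvalues (with multiplicity). -/
noncomputable def specMS {n : ℕ} (G : SimpleGraph (Fin n)) : Multiset ℝ :=
  Finset.univ.val.map (adjMatR_isHermitian G).eigenvalues

/-- `i`-th largest adjacency eigenvalue (0-indexed). -/
noncomputable def eigval {n : ℕ} (G : SimpleGraph (Fin n)) (i : ℕ) : ℝ :=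
  ((specMS G).sort (· ≥ ·)).getD i 0

/-- Graph energy. -/
noncomputable def energy {n : ℕ} (G : SimpleGraph (Fin n)) : ℝ :=
  ((specMS G).map (fun x => |x|)).sum

/-- ℓ¹ spectral distance. -/
noncomputable def specDist {n : ℕ} (G H : SimpleGraph (Fin n)) : ℝ :=
  ∑ i ∈ Finset.range n, |eigval G i - eigval H i|

/-- number of edges -/
noncomputable def numEdges {n : ℕ} (G : SimpleGraph (Fin n)) : ℕ := G.edgeSet.ncard

/-- `K_2 + (n-2)K_1`: one edge plus isolated vertices. -/
def oneEdgeG (n : ℕ) : SimpleGraph (Fin n) :=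
  SimpleGraph.fromRel (fun u v => (u : ℕ) = 0 ∧ (v : ℕ) = 1)

/-- `P_3 + (n-3)K_1`: a path on 3 vertices plus isolated vertices. -/
def path3G (n : ℕ) : SimpleGraph (Fin n) :=
  SimpleGraph.fromRel (fun u v => ((u : ℕ) = 0 ∧ (v : ℕ) = 1) ∨ ((u : ℕ) = 1 ∧ (v : ℕ) = 2))

/-- Complete bipartite graph `K_{a,b}` on `Fin (a+b)`. -/
def compBip (a b : ℕ) : SimpleGraph (Fin (a + b)) :=
  SimpleGraph.fromRel (fun u v => (u : ℕ) < a ∧ a ≤ (v : ℕ))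

/-- `K_{r,s} + tK_1`: complete bipartite plus `t` isolated vertices. -/
def compBipPlus (r s t : ℕ) : SimpleGraph (Fin (r + s + t)) :=
  SimpleGraph.fromRel (fun u v => (u : ℕ) < r ∧ r ≤ (v : ℕ) ∧ (v : ℕ) < r + s)

/-- `K_1 + K_{n-1}`: an isolated vertex plus a complete graph. -/
def k1PlusComplete (n : ℕ) : SimpleGraph (Fin n) :=
  SimpleGraph.fromRel (fun u v => (u : ℕ) ≠ 0 ∧ (v : ℕ) ≠ 0)

/-- `(K_1 + K_2) ∇ (n-3)K_1`: join of `K_1 + K_2` with `n-3` isolated vertices. -/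
def k1k2JoinEmpty (n : ℕ) : SimpleGraph (Fin n) :=
  SimpleGraph.fromRel (fun u v =>
    ((u : ℕ) = 1 ∧ (v : ℕ) = 2) ∨ ((u : ℕ) < 3 ∧ 3 ≤ (v : ℕ)))

/-!
The sign conditions say that the adjacency matrix has exactly one positive and at most two
nonnegative eigenvalues. By Sylvester's law of inertia these are the largest dimensions of a
subspace on which the form `x ↦ xᵀ A x` is positive definite, resp. positive semidefinite.

Three independent vertices or an induced `C₄` carry a positive semidefinite `3`-space, and an
induced `2K₂`, `P₄` or paw a positive definite plane. Excluding them, the non-edges pairwise meet,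
and two non-edges at a vertex `z` force `z` to be isolated (otherwise a paw appears), so the graph
is `K_n`, `K_n` minus an edge, or `K₁ + K_{n-1}`. Conversely, for these three graphs the form is
negative semidefinite on the hyperplane `∑ xᵢ = 0` (summing over the non-isolated vertices),
negative definite on a codimension-one subspace of it, and positive on the sum of the two basis
vectors of an edge.
-/

open Matrix QuadraticMap QuadraticForm

lemma Antitone.lt_ncard_setOf_mem_iff {α : Type*} [Preorder α] {m : ℕ} {f : Fin m → α}
    (hf : Antitone f) {s : Set α} (hs : IsUpperSet s) (i : Fin m) :
    (i : ℕ) < {j | f j ∈ s}.ncard ↔ f i ∈ s := by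
  constructor
  · intro hlt
    by_contra hi
    have hsub : {j | f j ∈ s} ⊆ Set.Iio i := fun j hj =>
      lt_of_not_ge fun hij => hi (hs (hf hij) hj)
    have := Set.ncard_le_ncard hsub
    rw [← Finset.coe_Iio, Set.ncard_coe_finset, Fin.card_Iio] at this
    omega
  · intro hi
    have hsub : Set.Iic i ⊆ {j | f j ∈ s} := fun j hji => hs (hf hji) hi
    have := Set.ncard_le_ncard hsub
    rw [← Finset.coe_Iic, Set.ncard_coe_finset, Fin.card_Iic] at this
    omega

lemma LinearMap.finrank_le_finrank_ker_add {K V W : Type*} [DivisionRing K] [AddCommGroup V]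
    [Module K V] [AddCommGroup W] [Module K W] [FiniteDimensional K V] [FiniteDimensional K W]
    (f : V →ₗ[K] W) :
    Module.finrank K V ≤ Module.finrank K (LinearMap.ker f) + Module.finrank K W := by
  rw [← f.finrank_range_add_finrank_ker, add_comm]
  exact Nat.add_le_add_left (Submodule.finrank_le _) _

lemma sum_sq_pos {ι : Type*} [Fintype ι] {x : ι → ℝ} (hx : x ≠ 0) : 0 < ∑ i, x i ^ 2 := by
  obtain ⟨i, hi⟩ := Function.ne_iff.mp hx
  exact Finset.sum_pos' (fun j _ => sq_nonneg _) ⟨i, Finset.mem_univ i, sq_pos_of_ne_zero hi⟩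

lemma sq_add_sq_le_sum_sq {ι : Type*} [Fintype ι] [DecidableEq ι] {a b : ι} (hab : a ≠ b)
    (x : ι → ℝ) : x a ^ 2 + x b ^ 2 ≤ ∑ i, x i ^ 2 := by
  rw [← Finset.sum_pair hab (f := fun i => x i ^ 2)]
  exact Finset.sum_le_sum_of_subset_of_nonneg (Finset.subset_univ _) fun i _ _ => sq_nonneg _

lemma QuadraticMap.apply_smul_add_smul {R M : Type*} [CommRing R] [AddCommGroup M] [Module R M]
    (Q : QuadraticMap R M R) (a b : R) (u v : M) :
    Q (a • u + b • v) = a ^ 2 * Q u + b ^ 2 * Q v + a * b * polar Q u v := by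
  have : Q (a • u + b • v) = Q (a • u) + Q (b • v) + polar Q (a • u) (b • v) := by
    simp [polar]
  rw [this, QuadraticMap.map_smul, QuadraticMap.map_smul, polar_smul_left, polar_smul_right]
  simp only [smul_eq_mul]
  ring

namespace QuadraticForm

variable {M : Type*} [AddCommGroup M] [Module ℝ M] [FiniteDimensional ℝ M] {Q : QuadraticForm ℝ M}

lemma le_sigPos_of_sum_pos {k : ℕ} (v : Fin k → M)
    (hv : ∀ c : Fin k → ℝ, c ≠ 0 → 0 < Q (∑ i, c i • v i)) : k ≤ sigPos Q := by
  have hli : LinearIndependent ℝ v := Fintype.linearIndependent_iff.mpr fun c hc => by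
    by_contra h
    simpa [hc] using hv c (Function.ne_iff.mpr (not_forall.mp h))
  have hpos : (Q.restrict (Submodule.span ℝ (Set.range v))).PosDef := by
    rintro ⟨x, hx⟩ hx0
    obtain ⟨c, rfl⟩ := (Submodule.mem_span_range_iff_exists_fun ℝ).mp hx
    refine hv c fun hc => hx0 ?_
    simp [hc]
  simpa [finrank_span_eq_card hli] using le_sigPos_of_posDef Q hpos

lemma sigNeg_add_le_of_sum_nonneg {k : ℕ} {v : Fin k → M} (hli : LinearIndependent ℝ v)
    (hv : ∀ c : Fin k → ℝ, 0 ≤ Q (∑ i, c i • v i)) : sigNeg Q + k ≤ Module.finrank ℝ M := by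
  have hnonpos : ∀ x ∈ Submodule.span ℝ (Set.range v), (-Q) x ≤ 0 := fun x hx => by
    obtain ⟨c, rfl⟩ := (Submodule.mem_span_range_iff_exists_fun ℝ).mp hx
    simpa using hv c
  simpa [finrank_span_eq_card hli] using sigPos_add_finrank_le_of_nonpos hnonpos

lemma two_le_sigPos {u v : M} (hu : 0 < Q u) (huv : polar Q u v ^ 2 < 4 * Q u * Q v) :
    2 ≤ sigPos Q := by
  refine le_sigPos_of_sum_pos ![u, v] fun c hc => ?_
  rw [Fin.sum_univ_two, Matrix.cons_val_zero, Matrix.cons_val_one, Matrix.cons_val_fin_one,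
    QuadraticMap.apply_smul_add_smul]
  rcases eq_or_ne (c 1) 0 with h1 | h1
  · have h0 : c 0 ≠ 0 := fun h0 => hc (funext fun i => by fin_cases i <;> simp [h0, h1])
    simpa [h1] using mul_pos (sq_pos_of_ne_zero h0) hu
  · -- `4 Q(u) Q(c₀u + c₁v) = (2 c₀ Q(u) + c₁ polar(u,v))² + c₁² (4 Q(u) Q(v) - polar(u,v)²)`
    have := mul_pos (sq_pos_of_ne_zero h1) (sub_pos.mpr huv)
    nlinarith [sq_nonneg (2 * c 0 * Q u + c 1 * polar Q u v)]

lemma sigPos_eq_one_of_ker {f g : M →ₗ[ℝ] ℝ} {x : M} (hx : 0 < Q x)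
    (hf : ∀ y, f y = 0 → Q y ≤ 0) (hfg : ∀ y, f y = 0 → g y = 0 → y ≠ 0 → Q y < 0) :
    sigPos Q = 1 ∧ Module.finrank ℝ M ≤ sigNeg Q + 2 := by
  have h1 : 1 ≤ sigPos Q := le_sigPos_of_sum_pos ![x] fun c hc => by
    have : c 0 ≠ 0 := fun h => hc (funext fun i => by fin_cases i; exact h)
    simpa [QuadraticMap.map_smul] using mul_pos (mul_self_pos.mpr this) hx
  have h2 := sigPos_add_finrank_le_of_nonpos (Q := Q) (V := LinearMap.ker f) hf
  have h3 := le_sigNeg_of_negDef Q (V := LinearMap.ker f ⊓ LinearMap.ker g)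
    fun ⟨y, hf, hg⟩ hy0 => by simpa using hfg y hf hg fun h => hy0 (by simp [h])
  have h4 := f.finrank_le_finrank_ker_add
  have h5 := (f.prod g).finrank_le_finrank_ker_add
  rw [LinearMap.ker_prod] at h5
  simp only [Module.finrank_self, Module.finrank_prod] at h4 h5
  omega

end QuadraticForm

namespace Matrix.IsHermitian

variable {ι : Type*} [Fintype ι] [DecidableEq ι] {A : Matrix ι ι ℝ} (hA : A.IsHermitian)

lemma dotProduct_eigenvectorBasis (i j : ι) :
    ⇑(hA.eigenvectorBasis i) ⬝ᵥ ⇑(hA.eigenvectorBasis j) = if i = j then 1 else 0 := by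
  rw [← orthonormal_iff_ite.mp hA.eigenvectorBasis.orthonormal i j,
    EuclideanSpace.inner_eq_star_dotProduct, dotProduct_comm]
  simp

lemma toLinearMap₂'_eigenvectorBasis (i j : ι) :
    Matrix.toLinearMap₂' ℝ A ⇑(hA.eigenvectorBasis i) ⇑(hA.eigenvectorBasis j) =
      if i = j then hA.eigenvalues j else 0 := by
  rw [Matrix.toLinearMap₂'_apply', hA.mulVec_eigenvectorBasis, dotProduct_smul,
    dotProduct_eigenvectorBasis]
  simp

theorem toQuadraticForm'_equivalent_weightedSumSquares :
    A.toQuadraticForm'.Equivalent (weightedSumSquares ℝ hA.eigenvalues) := by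
  let v := hA.eigenvectorBasis.toBasis.map (WithLp.linearEquiv 2 ℝ (ι → ℝ))
  have hv : ∀ i, v i = ⇑(hA.eigenvectorBasis i) := fun i => by simp [v]
  have hortho : (associated (R := ℝ) A.toQuadraticForm').IsOrthoᵢ v := by
    intro i j hij
    simp [Function.onFun, associated_apply, Matrix.toQuadraticForm', hv,
      toLinearMap₂'_eigenvectorBasis, hij, Ne.symm hij]
  have hdiag : (fun i => A.toQuadraticForm' (v i)) = hA.eigenvalues := by
    ext i
    simp [Matrix.toQuadraticForm', hv, toLinearMap₂'_eigenvectorBasis]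
  refine ⟨(A.toQuadraticForm'.isometryEquivBasisRepr v).trans ?_⟩
  rw [basisRepr_eq_of_iIsOrtho _ _ hortho, hdiag]
  exact .refl _

theorem sigPos_toQuadraticForm' : sigPos A.toQuadraticForm' = {i | 0 < hA.eigenvalues i}.ncard :=
  sigPos_of_equiv_weightedSumSquares hA.toQuadraticForm'_equivalent_weightedSumSquares

theorem sigNeg_toQuadraticForm' : sigNeg A.toQuadraticForm' = {i | hA.eigenvalues i < 0}.ncard :=
  sigNeg_of_equiv_weightedSumSquares hA.toQuadraticForm'_equivalent_weightedSumSquares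

lemma sort_eigenvalues :
    (Finset.univ.val.map hA.eigenvalues).sort (· ≥ ·) = List.ofFn hA.eigenvalues₀ := by
  rw [← hA.sort_roots_charpoly_eq_eigenvalues₀, hA.roots_charpoly_eq_eigenvalues, Multiset.map_map]
  rfl

lemma ncard_eigenvalues₀_mem (s : Set ℝ) :
    {j | hA.eigenvalues₀ j ∈ s}.ncard = {i | hA.eigenvalues i ∈ s}.ncard := by
  let σ := Fintype.equivOfCardEq (α := Fin (Fintype.card ι)) (Fintype.card_fin _)
  have : {i | hA.eigenvalues i ∈ s} = σ.symm ⁻¹' {j | hA.eigenvalues₀ j ∈ s} := rfl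
  rw [this, Set.ncard_preimage_of_injective_subset_range σ.symm.injective (by simp)]

lemma getD_sort_eigenvalues_mem_iff {s : Set ℝ} (hs : IsUpperSet s) {i : ℕ}
    (hi : i < Fintype.card ι) :
    ((Finset.univ.val.map hA.eigenvalues).sort (· ≥ ·)).getD i 0 ∈ s ↔
      i < {j | hA.eigenvalues j ∈ s}.ncard := by
  rw [sort_eigenvalues, List.getD_eq_getElem _ _ (by simpa using hi), List.getElem_ofFn,
    ← ncard_eigenvalues₀_mem]
  exact (hA.eigenvalues₀_antitone.lt_ncard_setOf_mem_iff hs ⟨i, hi⟩).symm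

end Matrix.IsHermitian

noncomputable def adjForm {n : ℕ} (G : SimpleGraph (Fin n)) : QuadraticForm ℝ (Fin n → ℝ) :=
  (adjMatR G).toQuadraticForm'

section AdjForm

variable {n : ℕ} {G H : SimpleGraph (Fin n)}

lemma adjMatR_apply [DecidableRel G.Adj] (i j : Fin n) :
    adjMatR G i j = if G.Adj i j then 1 else 0 := by
  rw [adjMatR, SimpleGraph.adjMatrix_apply]
  congr

lemma adjForm_apply (x : Fin n → ℝ) : adjForm G x = x ⬝ᵥ adjMatR G *ᵥ x := by
  simp [adjForm, Matrix.toQuadraticForm', Matrix.toLinearMap₂'_apply']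

lemma adjForm_apply_sum [DecidableRel G.Adj] (x : Fin n → ℝ) :
    adjForm G x = ∑ i, ∑ j, if G.Adj i j then x i * x j else 0 := by
  simp [adjForm_apply, dotProduct, mulVec, adjMatR_apply, Finset.mul_sum, mul_comm]

lemma polar_adjForm (x y : Fin n → ℝ) :
    polar (adjForm G) x y = x ⬝ᵥ adjMatR G *ᵥ y + y ⬝ᵥ adjMatR G *ᵥ x := by
  simp only [polar, adjForm_apply, mulVec_add, add_dotProduct, dotProduct_add]
  ring

lemma adjForm_single_add_single {a b : Fin n} (hab : G.Adj a b) :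
    adjForm G (Pi.single a 1 + Pi.single b 1) = 2 := by
  classical
  simp [adjForm_apply, mulVec_add, add_dotProduct, adjMatR_apply, hab, hab.symm]
  norm_num

lemma eigval_mem_iff {s : Set ℝ} (hs : IsUpperSet s) {i : ℕ} (hi : i < n) :
    eigval G i ∈ s ↔ i < {j | (adjMatR_isHermitian G).eigenvalues j ∈ s}.ncard :=
  (adjMatR_isHermitian G).getD_sort_eigenvalues_mem_iff hs (by simpa using hi)

lemma eigval_signs_iff (hn : 3 ≤ n) :
    (0 < eigval G 0 ∧ eigval G 1 ≤ 0 ∧ eigval G 2 < 0) ↔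
      sigPos (adjForm G) = 1 ∧ n ≤ sigNeg (adjForm G) + 2 := by
  let hA := adjMatR_isHermitian G
  have hpos (i : ℕ) (hi : i < n) := eigval_mem_iff (G := G) (isUpperSet_Ioi (0 : ℝ)) hi
  have hnonneg := eigval_mem_iff (G := G) (isUpperSet_Ici (0 : ℝ)) (i := 2) (by omega)
  have hcompl := Set.ncard_add_ncard_compl {j | hA.eigenvalues j < 0}
  simp only [Set.mem_Ioi, Set.mem_Ici, Set.compl_ofPred, not_lt, Nat.card_eq_fintype_card,
    Fintype.card_fin] at hpos hnonneg hcompl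
  rw [adjForm, hA.sigPos_toQuadraticForm', hA.sigNeg_toQuadraticForm',
    ← not_lt (b := eigval G 1), ← not_le (b := eigval G 2), hpos 0 (by omega),
    hpos 1 (by omega), hnonneg]
  omega

lemma adjMatR_eq_submatrix (e : G ≃g H) :
    adjMatR H = (adjMatR G).submatrix e.symm e.symm := by
  classical
  exact (e.reindex_adjMatrix ℝ).symm

lemma adjForm_equivalent (e : G ≃g H) : (adjForm G).Equivalent (adjForm H) :=
  ⟨{ LinearEquiv.funCongrLeft ℝ ℝ e.symm.toEquiv with
    map_app' := fun x => by
      rw [adjForm_apply, adjForm_apply, adjMatR_eq_submatrix e]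
      change (x ∘ e.symm.toEquiv) ⬝ᵥ ((adjMatR G).submatrix e.symm.toEquiv e.symm.toEquiv *ᵥ
        (x ∘ e.symm.toEquiv)) = x ⬝ᵥ (adjMatR G *ᵥ x)
      rw [submatrix_mulVec_equiv, Function.comp_assoc, Equiv.self_comp_symm, Function.comp_id,
        comp_equiv_dotProduct_comp_equiv] }⟩

lemma sigPos_eq_of_iso (e : G ≃g H) : sigPos (adjForm G) = sigPos (adjForm H) :=
  (adjForm_equivalent e).sigPos_eq

lemma sigNeg_eq_of_iso (e : G ≃g H) : sigNeg (adjForm G) = sigNeg (adjForm H) :=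
  (adjForm_equivalent e).sigNeg_eq

end AdjForm

section Computations

variable {n : ℕ} {G : SimpleGraph (Fin n)}

lemma adjForm_top (x : Fin n → ℝ) :
    adjForm (⊤ : SimpleGraph (Fin n)) x = (∑ i, x i) ^ 2 - ∑ i, x i ^ 2 := by
  have h (i j : Fin n) : (if (⊤ : SimpleGraph (Fin n)).Adj i j then x i * x j else 0) =
      x i * x j - if i = j then x i * x j else 0 := by
    by_cases hij : i = j <;> simp [hij]
  simp_rw [adjForm_apply_sum, h, Finset.sum_sub_distrib, Finset.sum_ite_eq, Finset.mem_univ,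
    if_true, ← Finset.mul_sum, ← Finset.sum_mul, _root_.sq]

lemma adjForm_deleteEdges (x : Fin n → ℝ) {a b : Fin n} (hab : G.Adj a b) :
    adjForm (G.deleteEdges {s(a, b)}) x = adjForm G x - 2 * x a * x b := by
  classical
  have h (i j : Fin n) : (if (G.deleteEdges {s(a, b)}).Adj i j then x i * x j else 0) =
      (if G.Adj i j then x i * x j else 0) - (if i = a ∧ j = b then x i * x j else 0) -
        (if i = b ∧ j = a then x i * x j else 0) := by
    by_cases h₁ : i = a ∧ j = b
    · obtain ⟨rfl, rfl⟩ := h₁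
      simp [hab, hab.ne.symm]
    by_cases h₂ : i = b ∧ j = a
    · obtain ⟨rfl, rfl⟩ := h₂
      simp [hab.symm, hab.ne]
    simp only [SimpleGraph.deleteEdges_adj, Set.mem_singleton_iff, Sym2.eq_iff, h₁, h₂,
      if_false, sub_zero, or_false, not_false_eq_true, and_true]
  simp_rw [adjForm_apply_sum, h, Finset.sum_sub_distrib]
  simp [ite_and]
  ring

lemma k1PlusComplete_adj (u v : Fin n) :
    (k1PlusComplete n).Adj u v ↔ u ≠ v ∧ (u : ℕ) ≠ 0 ∧ (v : ℕ) ≠ 0 := by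
  simp only [k1PlusComplete, SimpleGraph.fromRel_adj]
  tauto

lemma adjForm_k1PlusComplete (hn : 0 < n) (x : Fin n → ℝ) :
    adjForm (k1PlusComplete n) x = adjForm ⊤ (Function.update x ⟨0, hn⟩ 0) := by
  classical
  simp_rw [adjForm_apply_sum, k1PlusComplete_adj, SimpleGraph.top_adj]
  refine Finset.sum_congr rfl fun i _ => Finset.sum_congr rfl fun j _ => ?_
  by_cases hi : (i : ℕ) = 0
  · simp [show i = ⟨0, hn⟩ from Fin.ext hi]
  by_cases hj : (j : ℕ) = 0
  · simp [show j = ⟨0, hn⟩ from Fin.ext hj]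
  have hi' : i ≠ ⟨0, hn⟩ := fun h => hi (by simp [h])
  have hj' : j ≠ ⟨0, hn⟩ := fun h => hj (by simp [h])
  simp [hi, hj, hi', hj']

end Computations

section Obstructions

variable {n : ℕ} {G : SimpleGraph (Fin n)}

lemma sigNeg_add_three_le_of_indep {a b c : Fin n} (hab : a ≠ b) (hac : a ≠ c) (hbc : b ≠ c)
    (h₁ : ¬G.Adj a b) (h₂ : ¬G.Adj a c) (h₃ : ¬G.Adj b c) : sigNeg (adjForm G) + 3 ≤ n := by
  classical
  have hinj : Function.Injective ![a, b, c] := by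
    intro i j h
    fin_cases i <;> fin_cases j <;> simp_all [eq_comm]
  have hli : LinearIndependent ℝ ![(Pi.single a 1 : Fin n → ℝ), Pi.single b 1, Pi.single c 1] := by
    convert (Pi.basisFun ℝ (Fin n)).linearIndependent.comp _ hinj using 1
    ext i : 1
    fin_cases i <;> simp
  simpa using sigNeg_add_le_of_sum_nonneg hli fun t => by
    simp [Fin.sum_univ_three, adjForm_apply, mulVec_add, add_dotProduct, dotProduct_add,
      mulVec_smul, adjMatR_apply, h₁, h₂, h₃, mt SimpleGraph.Adj.symm h₁,
      mt SimpleGraph.Adj.symm h₂, mt SimpleGraph.Adj.symm h₃]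

lemma sigNeg_add_three_le_of_cycle4 {a b c d : Fin n} (hab : a ≠ b) (hcd : c ≠ d)
    (h₁ : ¬G.Adj a b) (h₂ : ¬G.Adj c d) (hac : G.Adj a c) (had : G.Adj a d) (hbc : G.Adj b c)
    (hbd : G.Adj b d) : sigNeg (adjForm G) + 3 ≤ n := by
  classical
  have hli : LinearIndependent ℝ ![(Pi.single a 1 : Fin n → ℝ) - Pi.single b 1,
      Pi.single c 1 - Pi.single d 1, Pi.single a 1 + Pi.single c 1] := by
    refine Fintype.linearIndependent_iff.mpr fun t ht => ?_
    have hb := congrFun ht b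
    have hd := congrFun ht d
    have ha := congrFun ht a
    simp [Fin.sum_univ_three, hab, hab.symm, hcd.symm, hac.ne, had.ne, had.ne.symm, hbc.ne,
      hbd.ne, hbd.ne.symm] at ha hb hd
    intro i
    fin_cases i <;> simp <;> linarith
  simpa using sigNeg_add_le_of_sum_nonneg hli fun t => by
    simp [Fin.sum_univ_three, adjForm_apply, mulVec_add, mulVec_sub, add_dotProduct,
      dotProduct_add, sub_dotProduct, dotProduct_sub, mulVec_smul, adjMatR_apply, h₁, h₂,
      mt SimpleGraph.Adj.symm h₁, mt SimpleGraph.Adj.symm h₂, hac, had, hbc, hbd, hac.symm,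
      had.symm, hbc.symm, hbd.symm]
    nlinarith [sq_nonneg (t 2)]

/-- Edges `pq` and `rs` joined at most by `qr`: an induced `2K₂` or `P₄`. -/
lemma two_le_sigPos_of_two_edges {p q r s : Fin n} (hpq : G.Adj p q) (hrs : G.Adj r s)
    (h₁ : ¬G.Adj p r) (h₂ : ¬G.Adj q s) (h₃ : ¬G.Adj p s) : 2 ≤ sigPos (adjForm G) := by
  classical
  refine two_le_sigPos (u := Pi.single p 1 + Pi.single q 1) (v := Pi.single r 1 + Pi.single s 1)
    (by rw [adjForm_single_add_single hpq]; norm_num) ?_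
  rw [adjForm_single_add_single hpq, adjForm_single_add_single hrs, polar_adjForm]
  simp [mulVec_add, add_dotProduct, dotProduct_add, adjMatR_apply, h₁, h₂, h₃,
    mt SimpleGraph.Adj.symm h₁, mt SimpleGraph.Adj.symm h₂, mt SimpleGraph.Adj.symm h₃,
    G.adj_comm r q]
  split_ifs <;> norm_num

lemma two_le_sigPos_of_paw {w x y z : Fin n} (hxy : G.Adj x y) (hwx : G.Adj w x)
    (hwy : G.Adj w y) (hwz : G.Adj w z) (h₁ : ¬G.Adj z x) (h₂ : ¬G.Adj z y) :
    2 ≤ sigPos (adjForm G) := by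
  classical
  refine two_le_sigPos (u := Pi.single x 1 + Pi.single y 1) (v := Pi.single w 1 + Pi.single z 2)
    (by rw [adjForm_single_add_single hxy]; norm_num) ?_
  rw [adjForm_single_add_single hxy, polar_adjForm, adjForm_apply]
  simp [mulVec_add, add_dotProduct, dotProduct_add, adjMatR_apply, h₁, h₂,
    mt SimpleGraph.Adj.symm h₁, mt SimpleGraph.Adj.symm h₂, hwx, hwy, hwz, hwx.symm, hwy.symm,
    hwz.symm]
  norm_num

end Obstructions

namespace SimpleGraph

variable {V : Type*} {G : SimpleGraph V}

lemma eq_or_eq_of_not_adj_of_not_adj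
    (hindep : ∀ a b c, a ≠ b → a ≠ c → b ≠ c → ¬G.Adj a b → ¬G.Adj a c → ¬G.Adj b c → False)
    (hedges : ∀ p q r s, G.Adj p q → G.Adj r s → ¬G.Adj p r → ¬G.Adj q s → ¬G.Adj p s → False)
    (hcycle : ∀ a b c d, a ≠ b → c ≠ d → ¬G.Adj a b → ¬G.Adj c d →
      G.Adj a c → G.Adj a d → G.Adj b c → G.Adj b d → False)
    (a b c d : V) (hab : a ≠ b) (hcd : c ≠ d) (h₁ : ¬G.Adj a b) (h₂ : ¬G.Adj c d) :
    a = c ∨ a = d ∨ b = c ∨ b = d := by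
  by_contra! h
  obtain ⟨hac, had, hbc, hbd⟩ := h
  by_cases hm₁ : G.Adj a c ∧ G.Adj b d
  · obtain ⟨hac', hbd'⟩ := hm₁
    by_cases had' : G.Adj a d
    · by_cases hbc' : G.Adj b c
      · exact hcycle a b c d hab hcd h₁ h₂ hac' had' hbc' hbd'
      · exact hedges c a d b hac'.symm hbd'.symm h₂ h₁ fun h => hbc' h.symm
    · exact hedges a c b d hac' hbd' h₁ h₂ had'
  by_cases hm₂ : G.Adj a d ∧ G.Adj b c
  · obtain ⟨had', hbc'⟩ := hm₂
    by_cases hac' : G.Adj a c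
    · exact hedges d a c b had'.symm hbc'.symm (fun h => h₂ h.symm) h₁
        fun h => hm₁ ⟨hac', h.symm⟩
    · exact hedges a d b c had' hbc' h₁ (fun h => h₂ h.symm) hac'
  rcases not_and_or.mp hm₁ with h₃ | h₃ <;> rcases not_and_or.mp hm₂ with h₄ | h₄
  · exact hindep a c d hac had hcd h₃ h₄ h₂
  · exact hindep a b c hab hac hbc h₁ h₃ h₄
  · exact hindep a b d hab had hbd h₁ h₄ h₃
  · exact hindep b c d hbc hbd hcd h₄ h₃ h₂

lemma eq_top_or_eq_deleteEdges_or_exists_not_adj_not_adj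
    (hshare : ∀ a b c d, a ≠ b → c ≠ d → ¬G.Adj a b → ¬G.Adj c d → a = c ∨ a = d ∨ b = c ∨ b = d) :
    G = ⊤ ∨ (∃ a b, a ≠ b ∧ G = (⊤ : SimpleGraph V).deleteEdges {s(a, b)}) ∨
      ∃ z x y, x ≠ y ∧ z ≠ x ∧ z ≠ y ∧ ¬G.Adj z x ∧ ¬G.Adj z y := by
  by_cases htop : G = ⊤
  · exact Or.inl htop
  obtain ⟨a, b, hab, h₁⟩ : ∃ a b, a ≠ b ∧ ¬G.Adj a b := by
    by_contra! h
    refine htop (SimpleGraph.ext ?_)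
    ext u v
    exact ⟨Adj.ne, h u v⟩
  by_cases hone : ∀ c d, c ≠ d → ¬G.Adj c d → s(c, d) = s(a, b)
  · refine Or.inr (Or.inl ⟨a, b, hab, ?_⟩)
    ext u v
    simp only [deleteEdges_adj, top_adj, Set.mem_singleton_iff]
    refine ⟨fun huv => ⟨huv.ne, fun he => h₁ ?_⟩, fun ⟨huv, he⟩ => ?_⟩
    · rcases Sym2.eq_iff.mp he with ⟨rfl, rfl⟩ | ⟨rfl, rfl⟩
      exacts [huv, huv.symm]
    · by_contra h
      exact he (hone u v huv h)
  push Not at hone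
  obtain ⟨c, d, hcd, h₂, hne⟩ := hone
  refine Or.inr (Or.inr ?_)
  rcases hshare a b c d hab hcd h₁ h₂ with rfl | rfl | rfl | rfl
  · exact ⟨a, b, d, by rintro rfl; exact hne rfl, hab, hcd, h₁, h₂⟩
  · exact ⟨a, b, c, by rintro rfl; exact hne Sym2.eq_swap, hab, hcd.symm, h₁,
      fun h => h₂ h.symm⟩
  · exact ⟨b, a, d, by rintro rfl; exact hne Sym2.eq_swap, hab.symm, hcd,
      fun h => h₁ h.symm, h₂⟩
  · exact ⟨b, a, c, by rintro rfl; exact hne rfl, hab.symm, hcd.symm, fun h => h₁ h.symm,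
      fun h => h₂ h.symm⟩

lemma not_adj_of_not_adj_of_not_adj
    (hindep : ∀ a b c, a ≠ b → a ≠ c → b ≠ c → ¬G.Adj a b → ¬G.Adj a c → ¬G.Adj b c → False)
    (hshare : ∀ a b c d, a ≠ b → c ≠ d → ¬G.Adj a b → ¬G.Adj c d → a = c ∨ a = d ∨ b = c ∨ b = d)
    (hpaw : ∀ w x y z, G.Adj x y → G.Adj w x → G.Adj w y → G.Adj w z →
      ¬G.Adj z x → ¬G.Adj z y → False)
    {x y z : V} (hxy : x ≠ y) (hzx : z ≠ x) (hzy : z ≠ y) (h₁ : ¬G.Adj z x) (h₂ : ¬G.Adj z y)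
    (w : V) : ¬G.Adj z w := by
  intro hzw
  have hwx : w ≠ x := by rintro rfl; exact h₁ hzw
  have hwy : w ≠ y := by rintro rfl; exact h₂ hzw
  have hxy' : G.Adj x y := by
    by_contra h
    exact hindep z x y hzx hzy hxy h₁ h₂ h
  have hwx' : G.Adj w x := by
    by_contra h
    rcases hshare w x z y hwx hzy h h₂ with h' | h' | h' | h'
    exacts [hzw.ne h'.symm, hwy h', hzx h'.symm, hxy h']
  have hwy' : G.Adj w y := by
    by_contra h
    rcases hshare w y z x hwy hzx h h₁ with h' | h' | h' | h'
    exacts [hzw.ne h'.symm, hwx h', hzy h'.symm, hxy h'.symm]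
  exact hpaw w x y z hxy' hwx' hwy' hzw.symm h₁ h₂

theorem eq_top_or_eq_deleteEdges_or_isolated
    (hindep : ∀ a b c, a ≠ b → a ≠ c → b ≠ c → ¬G.Adj a b → ¬G.Adj a c → ¬G.Adj b c → False)
    (hshare : ∀ a b c d, a ≠ b → c ≠ d → ¬G.Adj a b → ¬G.Adj c d → a = c ∨ a = d ∨ b = c ∨ b = d)
    (hpaw : ∀ w x y z, G.Adj x y → G.Adj w x → G.Adj w y → G.Adj w z →
      ¬G.Adj z x → ¬G.Adj z y → False) :
    G = ⊤ ∨ (∃ a b, a ≠ b ∧ G = (⊤ : SimpleGraph V).deleteEdges {s(a, b)}) ∨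
      ∃ z, ∀ u v, G.Adj u v ↔ u ≠ v ∧ u ≠ z ∧ v ≠ z := by
  rcases eq_top_or_eq_deleteEdges_or_exists_not_adj_not_adj hshare with
    h | h | ⟨z, x, y, hxy, hzx, hzy, h₁, h₂⟩
  · exact Or.inl h
  · exact Or.inr (Or.inl h)
  have hz := not_adj_of_not_adj_of_not_adj hindep hshare hpaw hxy hzx hzy h₁ h₂
  refine Or.inr (Or.inr ⟨z, fun u v => ⟨fun huv => ⟨huv.ne, ?_, ?_⟩, fun ⟨huv, huz, hvz⟩ => ?_⟩⟩)
  · rintro rfl; exact hz v huv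
  · rintro rfl; exact hz u huv.symm
  · by_contra h
    exact hindep z u v (Ne.symm huz) (Ne.symm hvz) huv (hz u) (hz v) h

end SimpleGraph

section Classification

variable {n : ℕ} {G : SimpleGraph (Fin n)}

lemma nonempty_iso_k1PlusComplete {z : Fin n} (h : ∀ u v, G.Adj u v ↔ u ≠ v ∧ u ≠ z ∧ v ≠ z) :
    Nonempty (G ≃g k1PlusComplete n) := by
  let σ := Equiv.swap z ⟨0, z.pos⟩
  have hσ (w : Fin n) : ((σ w : Fin n) : ℕ) = 0 ↔ w = z := by
    rw [← Fin.val_mk z.pos, ← Fin.ext_iff, Equiv.swap_apply_eq_iff, Equiv.swap_apply_right]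
  exact ⟨⟨σ, fun {u v} => by simp only [k1PlusComplete_adj, h, ne_eq, hσ, σ.injective.eq_iff]⟩⟩

lemma eq_top_or_eq_deleteEdges_or_isolated_of_signature (hpos : sigPos (adjForm G) ≤ 1)
    (hneg : n ≤ sigNeg (adjForm G) + 2) :
    G = ⊤ ∨ (∃ a b, a ≠ b ∧ G = (⊤ : SimpleGraph (Fin n)).deleteEdges {s(a, b)}) ∨
      ∃ z, ∀ u v, G.Adj u v ↔ u ≠ v ∧ u ≠ z ∧ v ≠ z := by
  have hindep (a b c : Fin n) (hab : a ≠ b) (hac : a ≠ c) (hbc : b ≠ c) (h₁ : ¬G.Adj a b)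
      (h₂ : ¬G.Adj a c) (h₃ : ¬G.Adj b c) : False := by
    have := sigNeg_add_three_le_of_indep hab hac hbc h₁ h₂ h₃
    omega
  have hshare := SimpleGraph.eq_or_eq_of_not_adj_of_not_adj hindep
    (fun _ _ _ _ h₁ h₂ h₃ h₄ h₅ => by have := two_le_sigPos_of_two_edges h₁ h₂ h₃ h₄ h₅; omega)
    (fun _ _ _ _ hab hcd h₁ h₂ h₃ h₄ h₅ h₆ => by
      have := sigNeg_add_three_le_of_cycle4 hab hcd h₁ h₂ h₃ h₄ h₅ h₆; omega)
  exact SimpleGraph.eq_top_or_eq_deleteEdges_or_isolated hindep hshare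
    (fun _ _ _ _ h₁ h₂ h₃ h₄ h₅ h₆ => by have := two_le_sigPos_of_paw h₁ h₂ h₃ h₄ h₅ h₆; omega)

end Classification

section Signatures

variable {n : ℕ}

lemma signature_top (hn : 2 ≤ n) :
    sigPos (adjForm (⊤ : SimpleGraph (Fin n))) = 1 ∧
      n ≤ sigNeg (adjForm (⊤ : SimpleGraph (Fin n))) + 2 := by
  have hQ (y : Fin n → ℝ) (hy : ∑ i, y i = 0) : adjForm ⊤ y = -∑ i, y i ^ 2 := by
    rw [adjForm_top, hy]
    ring
  simpa using sigPos_eq_one_of_ker (f := ∑ i, LinearMap.proj i)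
    (g := (LinearMap.proj ⟨0, by omega⟩ : (Fin n → ℝ) →ₗ[ℝ] ℝ))
    (x := Pi.single ⟨0, by omega⟩ 1 + Pi.single ⟨1, by omega⟩ 1)
    (by rw [adjForm_single_add_single (by simp [Fin.ext_iff])]; norm_num)
    (fun y hy => by
      simpa [hQ y (by simpa using hy)] using Finset.sum_nonneg fun i _ => sq_nonneg (y i))
    (fun y hy _ hy0 => by simpa [hQ y (by simpa using hy)] using sum_sq_pos hy0)

lemma signature_top_deleteEdges (hn : 3 ≤ n) {a b : Fin n} (hab : a ≠ b) :
    sigPos (adjForm ((⊤ : SimpleGraph (Fin n)).deleteEdges {s(a, b)})) = 1 ∧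
      n ≤ sigNeg (adjForm ((⊤ : SimpleGraph (Fin n)).deleteEdges {s(a, b)})) + 2 := by
  obtain ⟨c, hca, hcb⟩ := Finset.exists_mem_ne (s := Finset.univ.erase a) (by simp; omega) b
  have hac : ((⊤ : SimpleGraph (Fin n)).deleteEdges {s(a, b)}).Adj a c := by
    simp only [SimpleGraph.deleteEdges_adj, SimpleGraph.top_adj, Set.mem_singleton_iff,
      Sym2.eq_iff]
    have := Finset.ne_of_mem_erase hca
    tauto
  have hQ (y : Fin n → ℝ) (hy : ∑ i, y i = 0) :
      adjForm ((⊤ : SimpleGraph (Fin n)).deleteEdges {s(a, b)}) y =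
        -∑ i, y i ^ 2 - 2 * y a * y b := by
    rw [adjForm_deleteEdges y (by simpa using hab), adjForm_top, hy]
    ring
  simpa using sigPos_eq_one_of_ker (f := ∑ i, LinearMap.proj i)
    (g := (LinearMap.proj a : (Fin n → ℝ) →ₗ[ℝ] ℝ))
    (x := Pi.single a 1 + Pi.single c 1)
    (by rw [adjForm_single_add_single hac]; norm_num)
    (fun y hy => by
      rw [hQ y (by simpa using hy)]
      nlinarith [sq_add_sq_le_sum_sq hab y, sq_nonneg (y a + y b)])
    (fun y hy hya hy0 => by
      rw [hQ y (by simpa using hy), show y a = 0 from hya]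
      simpa using sum_sq_pos hy0)

lemma signature_k1PlusComplete (hn : 3 ≤ n) :
    sigPos (adjForm (k1PlusComplete n)) = 1 ∧ n ≤ sigNeg (adjForm (k1PlusComplete n)) + 2 := by
  set z : Fin n := ⟨0, by omega⟩
  have hQ (y : Fin n → ℝ) (hy : ∑ i ∈ Finset.univ \ {z}, y i = 0) :
      adjForm (k1PlusComplete n) y = -∑ i, Function.update y z 0 i ^ 2 := by
    rw [adjForm_k1PlusComplete (by omega), adjForm_top,
      Finset.sum_update_of_mem (Finset.mem_univ z), hy]
    ring
  simpa using sigPos_eq_one_of_ker (f := ∑ i ∈ Finset.univ \ {z}, LinearMap.proj i)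
    (g := (LinearMap.proj z : (Fin n → ℝ) →ₗ[ℝ] ℝ))
    (x := Pi.single (⟨1, by omega⟩ : Fin n) 1 + Pi.single ⟨2, by omega⟩ 1)
    (by rw [adjForm_single_add_single (by simp [k1PlusComplete_adj, Fin.ext_iff])]; norm_num)
    (fun y hy => by
      simpa [hQ y (by simpa using hy)] using
        Finset.sum_nonneg fun i _ => sq_nonneg (Function.update y z 0 i))
    (fun y hy hyz hy0 => by
      rw [hQ y (by simpa using hy), Function.update_eq_self_iff.mpr hyz.symm]
      simpa using sum_sq_pos hy0)

end Signatures

theorem eigval_sign_iff (n : ℕ) (hn : 3 ≤ n) (G : SimpleGraph (Fin n)) :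
    (0 < eigval G 0 ∧ eigval G 1 ≤ 0 ∧ eigval G 2 < 0) ↔
      (Nonempty (G ≃g (⊤ : SimpleGraph (Fin n))) ∨
        Nonempty (G ≃g k1PlusComplete n) ∨
        ∃ e ∈ (⊤ : SimpleGraph (Fin n)).edgeSet,
          Nonempty (G ≃g (⊤ : SimpleGraph (Fin n)).deleteEdges {e})) := by
  rw [eigval_signs_iff hn]
  constructor
  · rintro ⟨hpos, hneg⟩
    rcases eq_top_or_eq_deleteEdges_or_isolated_of_signature hpos.le hneg with
      rfl | ⟨a, b, hab, rfl⟩ | ⟨z, hz⟩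
    · exact Or.inl ⟨SimpleGraph.Iso.refl⟩
    · exact Or.inr (Or.inr ⟨s(a, b), by simpa using hab, ⟨SimpleGraph.Iso.refl⟩⟩)
    · exact Or.inr (Or.inl (nonempty_iso_k1PlusComplete hz))
  · rintro (h | h | ⟨e, he, h⟩) <;> obtain ⟨φ⟩ := h <;>
      rw [sigPos_eq_of_iso φ, sigNeg_eq_of_iso φ]
    · exact signature_top (by omega)
    · exact signature_k1PlusComplete hn
    · induction e using Sym2.ind with
      | _ a b => exact signature_top_deleteEdges hn (by simpa using he)
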